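/- For every graph G with k connected components, the maximum number of dependent arcs over all acyclic orientations of G equals ‖G‖ − |G| + k, where ‖G‖ is the number of edges and |G| the number of vertices. -/

import Mathlib

variable {V : Type*}

/-- An orientation of a simple graph `G`: each edge gets exactly one direction. -/
structure Orient (G : SimpleGraph V) where
  dir : V → V → Prop
  dir_adj : ∀ u v, dir u v → G.Adj u v
  adj_dir : ∀ u v, G.Adj u v → dir u v ∨ dir v u
  asymm : ∀ u v, dir u v → ¬ dir v u

/-- The relation obtained from `dir` by reversing the single arc `u → v`. -/
def reverseArc (dir : V → V → Prop) (u v : V) : V → V → Prop :=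
  fun a b => (dir a b ∧ ¬(a = u ∧ b = v)) ∨ (a = v ∧ b = u)

/-- A relation is acyclic if there is no directed cycle. -/
def IsAcyclicRel (dir : V → V → Prop) : Prop :=
  ∀ u v, dir u v → ¬ Relation.ReflTransGen dir v u

/-- An arc `u → v` is dependent if its reversal creates a directed cycle. -/
def DependentArc (dir : V → V → Prop) (u v : V) : Prop :=
  dir u v ∧ ¬ IsAcyclicRel (reverseArc dir u v)

/-- A cover graph admits an acyclic orientation with no dependent arcs. -/
def IsCoverGraph (G : SimpleGraph V) : Prop :=
  ∃ D : Orient G, IsAcyclicRel D.dir ∧ ∀ u v, ¬ DependentArc D.dir u v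

/-- The number of dependent arcs of an orientation. -/
noncomputable def numDependent {G : SimpleGraph V} (D : Orient G) : ℕ :=
  Set.ncard {p : V × V | DependentArc D.dir p.1 p.2}

/-- `d_min`: minimum number of dependent arcs over all acyclic orientations. -/
noncomputable def dmin (G : SimpleGraph V) : ℕ :=
  sInf {n | ∃ D : Orient G, IsAcyclicRel D.dir ∧ numDependent D = n}

/-- `d_max`: maximum number of dependent arcs over all acyclic orientations. -/
noncomputable def dmax (G : SimpleGraph V) : ℕ :=
  sSup {n | ∃ D : Orient G, IsAcyclicRel D.dir ∧ numDependent D = n}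

/-- `c(G)`: minimum number of edges to delete from `G` to get a cover graph. -/
noncomputable def coverDeletion (G : SimpleGraph V) : ℕ :=
  sInf {n | ∃ F : Set (Sym2 V), F ⊆ G.edgeSet ∧ IsCoverGraph (G.deleteEdges F) ∧ F.ncard = n}

/-- The generalized Mycielski graph `M_m(G)`; `none` is the apex `u`,
`some (i, a)` is the vertex `⟨i, a⟩`. -/
def genMycielski (G : SimpleGraph V) (m : ℕ) : SimpleGraph (Option (Fin (m + 1) × V)) where
  Adj x y :=
    match x, y with
    | some (i, a), some (j, b) =>
        G.Adj a b ∧ ((i = j ∧ (i : ℕ) = 0) ∨ (i : ℕ) + 1 = (j : ℕ) ∨ (j : ℕ) + 1 = (i : ℕ))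
    | some (i, _), none => (i : ℕ) = m
    | none, some (j, _) => (j : ℕ) = m
    | none, none => False
  symm := by
    constructor
    rintro (_ | ⟨i, a⟩) (_ | ⟨j, b⟩) h
    · exact h
    · exact h
    · exact h
    · refine ⟨h.1.symm, ?_⟩
      rcases h.2 with ⟨h1, h2⟩ | h' | h'
      · exact Or.inl ⟨h1.symm, h1 ▸ h2⟩
      · exact Or.inr (Or.inr h')
      · exact Or.inr (Or.inl h')
  loopless := by
    constructor
    rintro (_ | ⟨i, a⟩) h <;> simp_all

/-!
For an acyclic orientation an arc is dependent exactly when a second directed path bypasses it.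
Inducting along a topological numbering, the independent arcs alone join the ends of every arc,
so they span a subgraph with the same components as `G` and there are at least `|G| - k` of
them. Conversely, orient `G` along a depth-first search order. The earlier neighbours of a vertex
all lie on the search stack, hence on one forward path, so every in-arc but the last one is
bypassed: each vertex has at most one independent in-arc, and the first vertex of a component
has none. The same order, in which every vertex but the first of its component has an earlier
neighbour, gives `|G| ≤ ‖G‖ + k`.
-/

open Relation

section Relations

variable {r : V → V → Prop} {u v : V}

def deleteArc (r : V → V → Prop) (u v : V) : V → V → Prop :=
  fun a b => r a b ∧ ¬(a = u ∧ b = v)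

theorem reflTransGen_reverseArc {x y : V} (h : ReflTransGen (reverseArc r u v) x y) :
    ReflTransGen (deleteArc r u v) x y ∨
      ReflTransGen (deleteArc r u v) x v ∧ ReflTransGen (deleteArc r u v) u y := by
  induction h with
  | refl => exact Or.inl .refl
  | tail _ hzy ih =>
    rcases hzy with hzy | ⟨rfl, rfl⟩
    · exact ih.imp (·.tail hzy) (And.imp_right (·.tail hzy))
    · exact Or.inr ⟨ih.elim id (·.1), .refl⟩

theorem dependentArc_iff (hr : IsAcyclicRel r) :
    DependentArc r u v ↔ r u v ∧ ReflTransGen (deleteArc r u v) u v := by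
  refine ⟨fun ⟨huv, hcyc⟩ => ⟨huv, ?_⟩, fun ⟨huv, hpath⟩ => ⟨huv, fun hrev => ?_⟩⟩
  · simp only [IsAcyclicRel, not_forall, not_not] at hcyc
    obtain ⟨a, b, hab, hba⟩ := hcyc
    rcases hab with hab | ⟨rfl, rfl⟩
    · rcases reflTransGen_reverseArc hba with hba | ⟨hbv, hua⟩
      · exact absurd (ReflTransGen.mono (fun _ _ h => h.1) _ _ hba) (hr a b hab.1)
      · exact hua.trans (hbv.head hab)
    · rcases reflTransGen_reverseArc hba with h | ⟨h, _⟩ <;> exact h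
  · exact hrev v u (Or.inr ⟨rfl, rfl⟩) (ReflTransGen.mono (fun _ _ h => Or.inl h) _ _ hpath)

theorem Relation.ReflTransGen.steps_between {a b : V} (h : ReflTransGen r a b) :
    ReflTransGen (fun x y => r x y ∧ ReflTransGen r a x ∧ ReflTransGen r y b) a b := by
  induction h with
  | refl => exact .refl
  | tail hac hcb ih =>
    exact (ReflTransGen.mono (fun x y hxy => ⟨hxy.1, hxy.2.1, hxy.2.2.tail hcb⟩) _ _ ih).tail
      ⟨hcb, hac, .refl⟩

noncomputable def topRank (r : V → V → Prop) (v : V) : ℕ :=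
  {x | TransGen r x v}.ncard

variable [Finite V]

theorem topRank_lt (hr : IsAcyclicRel r) (h : TransGen r u v) : topRank r u < topRank r v := by
  refine Set.ncard_lt_ncard ⟨fun x hx => hx.trans h, fun hsub => ?_⟩
  obtain ⟨c, huc, hcu⟩ := TransGen.head'_iff.mp (hsub h : TransGen r u u)
  exact hr u c huc hcu

theorem eq_or_topRank_lt (hr : IsAcyclicRel r) (h : ReflTransGen r u v) :
    u = v ∨ topRank r u < topRank r v :=
  (reflTransGen_iff_eq_or_transGen.mp h).imp Eq.symm (topRank_lt hr)

theorem reflTransGen_not_dependentArc (hr : IsAcyclicRel r) (huv : r u v) :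
    ReflTransGen (fun a b => r a b ∧ ¬DependentArc r a b) u v := by
  induction hn : topRank r v - topRank r u using Nat.strong_induction_on generalizing u v with
  | _ n ih =>
    by_cases hdep : DependentArc r u v
    swap
    · exact .single ⟨huv, hdep⟩
    have hsub : deleteArc r u v ≤ r := fun _ _ h => h.1
    refine (((dependentArc_iff hr).mp hdep).2.steps_between).lift' id
      fun x y ⟨hxy, hux, hyv⟩ => ih (topRank r y - topRank r x) ?_ hxy.1 rfl
    -- every arc of the bypass spans a shorter `topRank` interval than `u → v`
    have hxy' := topRank_lt hr (.single hxy.1)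
    rcases eq_or_topRank_lt hr (ReflTransGen.mono hsub _ _ hux) with rfl | hux' <;>
      rcases eq_or_topRank_lt hr (ReflTransGen.mono hsub _ _ hyv) with rfl | hyv'
    · exact absurd ⟨rfl, rfl⟩ hxy.2
    all_goals omega

end Relations

namespace SimpleGraph

variable {G H : SimpleGraph V}

theorem ncard_edgeSet_fromRel [Finite V] {r : V → V → Prop} (hr : ∀ a b, r a b → ¬r b a) :
    (fromRel r).edgeSet.ncard = {p : V × V | r p.1 p.2}.ncard := by
  have himage : (fromRel r).edgeSet = (fun p : V × V => s(p.1, p.2)) '' {p | r p.1 p.2} := by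
    ext e
    induction e using Sym2.ind with
    | _ a b =>
      simp only [mem_edgeSet, fromRel_adj, Set.mem_image, Set.mem_ofPred_eq, Prod.exists,
        Sym2.eq_iff]
      constructor
      · rintro ⟨-, hab | hba⟩
        exacts [⟨a, b, hab, .inl ⟨rfl, rfl⟩⟩, ⟨b, a, hba, .inr ⟨rfl, rfl⟩⟩]
      · rintro ⟨x, y, hxy, ⟨rfl, rfl⟩ | ⟨rfl, rfl⟩⟩
        · exact ⟨fun h => hr x x (h ▸ hxy) (h ▸ hxy), .inl hxy⟩
        · exact ⟨fun h => hr x x (h ▸ hxy) (h ▸ hxy), .inr hxy⟩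
  rw [himage, Set.InjOn.ncard_image]
  rintro ⟨a, b⟩ hab ⟨c, d⟩ hcd h
  rcases Sym2.eq_iff.mp h with ⟨rfl, rfl⟩ | ⟨rfl, rfl⟩
  · rfl
  · exact absurd hcd (hr _ _ hab)

theorem card_connectedComponent_congr (h : G.Reachable = H.Reachable) :
    Nat.card G.ConnectedComponent = Nat.card H.ConnectedComponent := by
  unfold ConnectedComponent
  rw [h]

end SimpleGraph

namespace Orient

variable {G : SimpleGraph V} (D : Orient G)

theorem fromRel_dir : SimpleGraph.fromRel D.dir = G := by
  ext a b
  rw [SimpleGraph.fromRel_adj]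
  exact ⟨fun ⟨_, h⟩ => h.elim (D.dir_adj a b) fun h => (D.dir_adj b a h).symm,
    fun h => ⟨h.ne, D.adj_dir a b h⟩⟩

theorem ncard_edgeSet [Finite V] : G.edgeSet.ncard = {p : V × V | D.dir p.1 p.2}.ncard := by
  conv_lhs => rw [← D.fromRel_dir]
  exact SimpleGraph.ncard_edgeSet_fromRel D.asymm

def IsIndependent (a b : V) : Prop := D.dir a b ∧ ¬DependentArc D.dir a b

def independentGraph : SimpleGraph V := SimpleGraph.fromRel D.IsIndependent

theorem ncard_isIndependent_add_numDependent [Finite V] :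
    {p : V × V | D.IsIndependent p.1 p.2}.ncard + numDependent D = G.edgeSet.ncard := by
  have hindep : {p : V × V | D.IsIndependent p.1 p.2} =
      {p | D.dir p.1 p.2} \ {p | DependentArc D.dir p.1 p.2} := rfl
  rw [hindep, numDependent, Set.ncard_sdiff_add_ncard_of_subset fun p hp => hp.1, D.ncard_edgeSet]

theorem ncard_edgeSet_independentGraph [Finite V] :
    D.independentGraph.edgeSet.ncard = {p : V × V | D.IsIndependent p.1 p.2}.ncard :=
  SimpleGraph.ncard_edgeSet_fromRel fun a b h h' => D.asymm a b h.1 h'.1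

theorem reachable_independentGraph [Finite V] (hD : IsAcyclicRel D.dir) :
    D.independentGraph.Reachable = G.Reachable := by
  have hle : D.independentGraph ≤ G := fun a b h =>
    ((SimpleGraph.fromRel_adj _ a b).mp h).2.elim (fun h => D.dir_adj a b h.1)
      fun h => (D.dir_adj b a h.1).symm
  have harc : ∀ a b, D.dir a b → D.independentGraph.Reachable a b := fun a b hab =>
    (SimpleGraph.reachable_iff_reflTransGen a b).mpr <|
      ReflTransGen.mono (fun x y hxy => (SimpleGraph.fromRel_adj _ x y).mpr
        ⟨(D.dir_adj x y hxy.1).ne, .inl hxy⟩) _ _ (reflTransGen_not_dependentArc hD hab)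
  ext u v
  refine ⟨fun h => h.mono hle, fun h => ?_⟩
  rw [SimpleGraph.reachable_iff_reflTransGen] at h
  induction h with
  | refl => rfl
  | tail _ hab ih => exact ih.trans ((D.adj_dir _ _ hab).elim (harc _ _) fun h => (harc _ _ h).symm)

end Orient

section Ranking

variable (G : SimpleGraph V) (f : V → ℕ)

def rankRel (a b : V) : Prop := G.Adj a b ∧ f a < f b

def IsComponentMin (v : V) : Prop := ∀ u, G.Reachable u v → f v ≤ f u

def Orient.ofRank (hf : f.Injective) : Orient G where
  dir := rankRel G f
  dir_adj _ _ h := h.1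
  adj_dir _ _ h := (lt_or_gt_of_ne (hf.ne h.ne)).imp (⟨h, ·⟩) (⟨h.symm, ·⟩)
  asymm _ _ h h' := lt_asymm h.2 h'.2

structure IsDFSOrder : Prop where
  injective : f.Injective
  reflTransGen_of_adj : ∀ ⦃u w v⦄, G.Adj u v → G.Adj w v → f u < f w → f w < f v →
    ReflTransGen (rankRel G f) u w
  isComponentMin_or_exists_rankRel : ∀ v, IsComponentMin G f v ∨ ∃ u, rankRel G f u v

variable {G f} {u v w : V}

theorem le_of_reflTransGen_rankRel (h : ReflTransGen (rankRel G f) u v) : f u ≤ f v := by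
  induction h with
  | refl => exact le_rfl
  | tail _ hbc ih => exact ih.trans hbc.2.le

theorem isAcyclicRel_rankRel : IsAcyclicRel (rankRel G f) :=
  fun _ _ huv hvu => (le_of_reflTransGen_rankRel hvu).not_gt huv.2

theorem IsComponentMin.not_rankRel (hv : IsComponentMin G f v) : ¬rankRel G f u v :=
  fun h => (hv u h.1.reachable).not_gt h.2

theorem ncard_setOf_isComponentMin (hf : f.Injective) :
    {v | IsComponentMin G f v}.ncard = Nat.card G.ConnectedComponent := by
  have hinj : Set.InjOn G.connectedComponentMk {v | IsComponentMin G f v} := fun v hv w hw h =>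
    have hvw := SimpleGraph.ConnectedComponent.exact h
    hf ((hv w hvw.symm).antisymm (hw v hvw))
  have himage : G.connectedComponentMk '' {v | IsComponentMin G f v} = Set.univ := by
    refine Set.eq_univ_of_forall fun c => ?_
    induction c using SimpleGraph.ConnectedComponent.ind with
    | _ v =>
      have hm : G.Reachable (Function.argminOn f {u | G.Reachable u v} ⟨v, .rfl⟩) v :=
        Function.argminOn_mem f {u | G.Reachable u v} _
      exact ⟨_, fun u hu => Function.argminOn_le f _ (hu.trans hm),
        SimpleGraph.ConnectedComponent.sound hm⟩
  rw [← hinj.ncard_image, himage, Set.ncard_univ]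

namespace IsDFSOrder

variable (hf : IsDFSOrder G f)
include hf

theorem dependentArc (huv : rankRel G f u v) (hwv : rankRel G f w v) (hlt : f u < f w) :
    DependentArc (rankRel G f) u v := by
  refine (dependentArc_iff isAcyclicRel_rankRel).mpr ⟨huv, ?_⟩
  have hpath := (hf.reflTransGen_of_adj huv.1 hwv.1 hlt hwv.2).steps_between
  refine (ReflTransGen.mono (fun a b hab => ⟨hab.1, fun ⟨_, hb⟩ => ?_⟩) _ _ hpath).tail
    ⟨hwv, fun ⟨h, _⟩ => (h ▸ hlt).false⟩
  exact (le_of_reflTransGen_rankRel (hb ▸ hab.2.2)).not_gt hwv.2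

theorem card_le_ncard_edgeSet_add_card_connectedComponent [Finite V] :
    Nat.card V ≤ G.edgeSet.ncard + Nat.card G.ConnectedComponent := by
  have hheads : {v | IsComponentMin G f v}ᶜ ⊆ Prod.snd '' {p : V × V | rankRel G f p.1 p.2} :=
    fun v hv =>
      let ⟨u, hu⟩ := (hf.isComponentMin_or_exists_rankRel v).resolve_left hv
      ⟨(u, v), hu, rfl⟩
  have hcompl := (Set.ncard_le_ncard hheads).trans Set.ncard_image_le
  have hsplit := Set.ncard_add_ncard_compl {v | IsComponentMin G f v}
  rw [ncard_setOf_isComponentMin hf.injective] at hsplit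
  have hedges : G.edgeSet.ncard = {p : V × V | rankRel G f p.1 p.2}.ncard :=
    (Orient.ofRank G f hf.injective).ncard_edgeSet
  omega

theorem le_numDependent [Finite V] :
    G.edgeSet.ncard + Nat.card G.ConnectedComponent ≤
      numDependent (Orient.ofRank G f hf.injective) + Nat.card V := by
  set D := Orient.ofRank G f hf.injective
  have hinj : Set.InjOn Prod.snd {p : V × V | D.IsIndependent p.1 p.2} := by
    rintro ⟨u, v⟩ ⟨huv, hu⟩ ⟨w, v'⟩ ⟨hwv, hw⟩ (rfl : v = v')
    rcases lt_trichotomy (f u) (f w) with hlt | heq | hlt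
    · exact absurd (hf.dependentArc huv hwv hlt) hu
    · rw [hf.injective heq]
    · exact absurd (hf.dependentArc hwv huv hlt) hw
  have hheads : Prod.snd '' {p : V × V | D.IsIndependent p.1 p.2} ⊆
      {v | IsComponentMin G f v}ᶜ := by
    rintro _ ⟨⟨u, v⟩, ⟨huv, -⟩, rfl⟩ hv
    exact hv.not_rankRel huv
  have hindep := hinj.ncard_image ▸ Set.ncard_le_ncard hheads
  have hsplit := Set.ncard_add_ncard_compl {v | IsComponentMin G f v}
  rw [ncard_setOf_isComponentMin hf.injective] at hsplit
  have := D.ncard_isIndependent_add_numDependent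
  omega

end IsDFSOrder

end Ranking

section ListIndex

theorem List.mem_append_singleton {L : List V} {v x : V} : v ∈ L ++ [x] ↔ v ∈ L ∨ v = x := by
  simp

variable [DecidableEq V] {L : List V} {a b x : V}

theorem List.mem_of_idxOf_lt_idxOf (h : L.idxOf a < L.idxOf b) : a ∈ L := by
  by_contra ha
  rw [List.idxOf_eq_length_iff.mpr ha] at h
  exact (List.idxOf_le_length).not_gt h

theorem List.mem_of_idxOf_append_lt (h : (L ++ [x]).idxOf a < L.length) : a ∈ L := by
  by_contra ha
  rw [List.idxOf_append_of_notMem ha] at h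
  omega

theorem List.idxOf_le_idxOf_append (a : V) : L.idxOf a ≤ (L ++ [x]).idxOf a := by
  by_cases ha : a ∈ L
  · rw [List.idxOf_append_of_mem ha]
  · rw [List.idxOf_append_of_notMem ha, List.idxOf_eq_length_iff.mpr ha]
    exact Nat.le_add_right _ _

theorem List.idxOf_append_self (hx : x ∉ L) : (L ++ [x]).idxOf x = L.length := by
  simp [List.idxOf_append_of_notMem hx]

end ListIndex

section DepthFirstSearch

variable (G : SimpleGraph V)

def IsActive (L : List V) (a : V) : Prop := a ∈ L ∧ ∃ b, b ∉ L ∧ G.Adj a b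

variable {G} {L : List V} {a b u v w x : V}

theorem IsActive.of_append (h : IsActive G (L ++ [x]) a) (ha : a ∈ L) : IsActive G L a :=
  let ⟨b, hb, hab⟩ := h.2
  ⟨ha, b, fun hbL => hb (List.mem_append_left _ hbL), hab⟩

theorem mem_of_reachable (hL : ∀ a, ¬IsActive G L a) (hu : u ∈ L) (huv : G.Reachable u v) :
    v ∈ L := by
  rw [SimpleGraph.reachable_iff_reflTransGen] at huv
  induction huv with
  | refl => exact hu
  | tail _ hbc ih => exact by_contra fun hc => hL _ ⟨ih, _, hc, hbc⟩

variable [DecidableEq V]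

variable (G) in
def forwardArc (L : List V) (a b : V) : Prop := rankRel G L.idxOf a b ∧ b ∈ L

variable (G) in
/-- `L` lists the vertices visited so far by a depth-first search. Its active vertices are those
still on the search stack, so they lie on one forward path. Unvisited vertices have index
`L.length`. -/
structure IsDFSPrefix (L : List V) : Prop where
  nodup : L.Nodup
  reflTransGen_of_isActive : ∀ ⦃u w⦄, IsActive G L u → IsActive G L w →
    L.idxOf u ≤ L.idxOf w → ReflTransGen (forwardArc G L) u w
  reflTransGen_of_adj : ∀ ⦃u w v⦄, G.Adj u v → G.Adj w v → v ∈ L → L.idxOf u < L.idxOf w →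
    L.idxOf w < L.idxOf v → ReflTransGen (forwardArc G L) u w
  isComponentMin_or_exists_rankRel : ∀ v ∈ L,
    IsComponentMin G L.idxOf v ∨ ∃ u, rankRel G L.idxOf u v

theorem rankRel_append (hv : v ∈ L) (h : rankRel G L.idxOf u v) :
    rankRel G (L ++ [x]).idxOf u v := by
  have hu : u ∈ L := List.mem_of_idxOf_lt_idxOf h.2
  refine ⟨h.1, ?_⟩
  beta_reduce
  rw [List.idxOf_append_of_mem hu, List.idxOf_append_of_mem hv]
  exact h.2

theorem forwardArc.append (h : forwardArc G L a b) : forwardArc G (L ++ [x]) a b :=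
  ⟨rankRel_append h.2 h.1, List.mem_append_left _ h.2⟩

theorem reflTransGen_forwardArc_append (h : ReflTransGen (forwardArc G L) a b) :
    ReflTransGen (forwardArc G (L ++ [x])) a b :=
  ReflTransGen.mono (fun _ _ => forwardArc.append) _ _ h

theorem forwardArc_append_self (hx : x ∉ L) (ha : a ∈ L) (hax : G.Adj a x) :
    forwardArc G (L ++ [x]) a x := by
  refine ⟨⟨hax, ?_⟩, by simp⟩
  beta_reduce
  rw [List.idxOf_append_of_mem ha, List.idxOf_append_self hx]
  exact List.idxOf_lt_length_of_mem ha

namespace IsDFSPrefix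

section Step

-- `hlink` says that `x` may be visited next: it is adjacent to the top of the stack, or the
-- stack is empty.
variable (hL : IsDFSPrefix G L) (hx : x ∉ L)
  (hlink : ∀ u, IsActive G L u → ∃ y ∈ L, G.Adj y x ∧ ReflTransGen (forwardArc G L) u y)
include hL hx hlink

theorem reflTransGen_of_isActive_append (hu : IsActive G (L ++ [x]) u)
    (hw : IsActive G (L ++ [x]) w) (huw : (L ++ [x]).idxOf u ≤ (L ++ [x]).idxOf w) :
    ReflTransGen (forwardArc G (L ++ [x])) u w := by
  rcases List.mem_append_singleton.mp hw.1 with hwL | rfl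
  · rw [List.idxOf_append_of_mem hwL] at huw
    have huL := List.mem_of_idxOf_append_lt (huw.trans_lt (List.idxOf_lt_length_of_mem hwL))
    rw [List.idxOf_append_of_mem huL] at huw
    exact reflTransGen_forwardArc_append
      (hL.reflTransGen_of_isActive (hu.of_append huL) (hw.of_append hwL) huw)
  · rcases List.mem_append_singleton.mp hu.1 with huL | rfl
    · obtain ⟨y, hy, hyw, huy⟩ := hlink u (hu.of_append huL)
      exact (reflTransGen_forwardArc_append huy).tail (forwardArc_append_self hx hy hyw)
    · rfl

theorem reflTransGen_of_adj_append (huv : G.Adj u v) (hwv : G.Adj w v) (hv : v ∈ L ++ [x])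
    (huw : (L ++ [x]).idxOf u < (L ++ [x]).idxOf w)
    (hwv' : (L ++ [x]).idxOf w < (L ++ [x]).idxOf v) :
    ReflTransGen (forwardArc G (L ++ [x])) u w := by
  have hv' : (L ++ [x]).idxOf v < L.length + 1 := by
    simpa using List.idxOf_lt_length_of_mem hv
  have hwL := List.mem_of_idxOf_append_lt (by omega : (L ++ [x]).idxOf w < L.length)
  have huL := List.mem_of_idxOf_append_lt (by omega : (L ++ [x]).idxOf u < L.length)
  rw [List.idxOf_append_of_mem huL, List.idxOf_append_of_mem hwL] at huw
  refine reflTransGen_forwardArc_append ?_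
  rcases List.mem_append_singleton.mp hv with hvL | rfl
  · rw [List.idxOf_append_of_mem hwL, List.idxOf_append_of_mem hvL] at hwv'
    exact hL.reflTransGen_of_adj huv hwv hvL huw hwv'
  · exact hL.reflTransGen_of_isActive ⟨huL, v, hx, huv⟩ ⟨hwL, v, hx, hwv⟩ huw.le

theorem isComponentMin_or_exists_rankRel_append (hv : v ∈ L ++ [x]) :
    IsComponentMin G (L ++ [x]).idxOf v ∨ ∃ u, rankRel G (L ++ [x]).idxOf u v := by
  rcases List.mem_append_singleton.mp hv with hvL | rfl
  · refine (hL.isComponentMin_or_exists_rankRel v hvL).imp (fun hmin u hu => ?_)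
      fun ⟨u, hu⟩ => ⟨u, rankRel_append hvL hu⟩
    beta_reduce
    rw [List.idxOf_append_of_mem hvL]
    exact (hmin u hu).trans (List.idxOf_le_idxOf_append u)
  · by_cases hnbr : ∃ y ∈ L, G.Adj y v
    · obtain ⟨y, hy, hyv⟩ := hnbr
      exact .inr ⟨y, (forwardArc_append_self hx hy hyv).1⟩
    · refine .inl fun u hu => ?_
      have hclosed : ∀ a, ¬IsActive G L a := fun a ha =>
        let ⟨y, hy, hyv, _⟩ := hlink a ha
        hnbr ⟨y, hy, hyv⟩
      have huL : u ∉ L := fun huL => hx (mem_of_reachable hclosed huL hu)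
      beta_reduce
      rw [List.idxOf_append_self hx, ← List.idxOf_eq_length_iff.mpr huL]
      exact List.idxOf_le_idxOf_append u

theorem append : IsDFSPrefix G (L ++ [x]) where
  nodup := List.concat_eq_append ▸ hL.nodup.concat hx
  reflTransGen_of_isActive _ _ := hL.reflTransGen_of_isActive_append hx hlink
  reflTransGen_of_adj _ _ _ := hL.reflTransGen_of_adj_append hx hlink
  isComponentMin_or_exists_rankRel _ := hL.isComponentMin_or_exists_rankRel_append hx hlink

end Step

theorem nil : IsDFSPrefix G [] where
  nodup := List.nodup_nil
  reflTransGen_of_isActive _ _ hu := absurd hu.1 List.not_mem_nil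
  reflTransGen_of_adj _ _ _ _ _ hv := absurd hv List.not_mem_nil
  isComponentMin_or_exists_rankRel _ hv := absurd hv List.not_mem_nil

theorem exists_append (hL : IsDFSPrefix G L) (h : ∃ x, x ∉ L) :
    ∃ x, x ∉ L ∧ IsDFSPrefix G (L ++ [x]) := by
  by_cases hA : ∃ a, IsActive G L a
  · obtain ⟨a, ha, hmax⟩ := Set.exists_max_image {a | IsActive G L a} L.idxOf
      (L.finite_toSet.subset fun a ha => ha.1) hA
    obtain ⟨x, hx, hax⟩ := ha.2
    exact ⟨x, hx, hL.append hx fun u hu =>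
      ⟨a, ha.1, hax, hL.reflTransGen_of_isActive hu ha (hmax u hu)⟩⟩
  · obtain ⟨x, hx⟩ := h
    exact ⟨x, hx, hL.append hx fun u hu => absurd ⟨u, hu⟩ hA⟩

theorem exists_complete [Fintype V] {L : List V} (hL : IsDFSPrefix G L) :
    ∃ L', IsDFSPrefix G L' ∧ ∀ v, v ∈ L' := by
  by_cases hall : ∀ v, v ∈ L
  · exact ⟨L, hL, hall⟩
  obtain ⟨x, -, hLx⟩ := hL.exists_append (not_forall.mp hall)
  have : L.length + 1 ≤ Fintype.card V := by simpa using hLx.nodup.length_le_card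
  exact hLx.exists_complete
termination_by Fintype.card V - L.length

theorem isDFSOrder (hL : IsDFSPrefix G L) (hall : ∀ v, v ∈ L) : IsDFSOrder G L.idxOf where
  injective u _ h := (List.idxOf_inj (hall u)).mp h
  reflTransGen_of_adj _ _ v huv hwv huw hwv' := ReflTransGen.mono (fun _ _ h => h.1) _ _
    (hL.reflTransGen_of_adj huv hwv (hall v) huw hwv')
  isComponentMin_or_exists_rankRel v := hL.isComponentMin_or_exists_rankRel v (hall v)

end IsDFSPrefix

end DepthFirstSearch

theorem exists_isDFSOrder [Finite V] (G : SimpleGraph V) : ∃ f, IsDFSOrder G f := by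
  classical
  have := Fintype.ofFinite V
  obtain ⟨L, hL, hall⟩ := (IsDFSPrefix.nil (G := G)).exists_complete
  exact ⟨_, hL.isDFSOrder hall⟩

theorem SimpleGraph.card_le_ncard_edgeSet_add_card_connectedComponent [Finite V]
    (G : SimpleGraph V) : Nat.card V ≤ G.edgeSet.ncard + Nat.card G.ConnectedComponent :=
  let ⟨_, hf⟩ := exists_isDFSOrder G
  hf.card_le_ncard_edgeSet_add_card_connectedComponent

theorem Orient.numDependent_add_card_le [Finite V] {G : SimpleGraph V} (D : Orient G)
    (hD : IsAcyclicRel D.dir) :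
    numDependent D + Nat.card V ≤ G.edgeSet.ncard + Nat.card G.ConnectedComponent := by
  have hH := D.independentGraph.card_le_ncard_edgeSet_add_card_connectedComponent
  rw [SimpleGraph.card_connectedComponent_congr (D.reachable_independentGraph hD),
    D.ncard_edgeSet_independentGraph] at hH
  have := D.ncard_isIndependent_add_numDependent
  omega

theorem exists_orient_le_numDependent [Finite V] (G : SimpleGraph V) :
    ∃ D : Orient G, IsAcyclicRel D.dir ∧
      G.edgeSet.ncard + Nat.card G.ConnectedComponent ≤ numDependent D + Nat.card V :=
  let ⟨_, hf⟩ := exists_isDFSOrder G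
  ⟨_, isAcyclicRel_rankRel, hf.le_numDependent⟩

theorem dmax_eq [Finite V] (G : SimpleGraph V) :
    dmax G + Nat.card V = G.edgeSet.ncard + Nat.card G.ConnectedComponent := by
  set S := {n | ∃ D : Orient G, IsAcyclicRel D.dir ∧ numDependent D = n}
  obtain ⟨D₀, hD₀, hlower⟩ := exists_orient_le_numDependent G
  have hbdd : BddAbove S := ⟨G.edgeSet.ncard + Nat.card G.ConnectedComponent, by
    rintro _ ⟨D, hD, rfl⟩
    exact le_of_add_le_left (D.numDependent_add_card_le hD)⟩
  obtain ⟨D₁, hD₁, hmax⟩ : sSup S ∈ S := Nat.sSup_mem ⟨_, D₀, hD₀, rfl⟩ hbdd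
  have hle : numDependent D₀ ≤ sSup S := le_csSup hbdd ⟨D₀, hD₀, rfl⟩
  have hupper := D₁.numDependent_add_card_le hD₁
  change sSup S + Nat.card V = _
  omega
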